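/- arXiv:2205.02009 — 3 statements merged into one kernel-verified Lean document; each statement's English description precedes it below -/
import Mathlib

section
/- After pivoting about an edge (u,v) of G, for a vertex pair (a,b) with a ∈ N_G(u)\({v} ∪ N_G(v)) and b ∈ N_G(v)\({u} ∪ N_G(u)), a and b are adjacent in G ∧ uv if and only if they are non-adjacent in G. -/
/-!
Follow the pair `a, b` through `G ⋆ u ⋆ v ⋆ u`. Complementing at `u` joins `a` to `v` (both are
neighbours of `u`, not adjacent to each other) and leaves `ab` alone since `b ∉ N(u)`. Now `a, b`
and `u` are all neighbours of `v`, so complementing at `v` toggles `ab` and cuts the edge `ua`.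
Hence `a ∉ N(u)` for the last complementation, which leaves `ab` as it is.
-/

/-- Local complementation of `G` about `u`: toggles the edge between each pair of
distinct neighbours of `u`. -/
def localComp {V : Type*} (G : SimpleGraph V) (u : V) : SimpleGraph V where
  Adj b c := b ≠ c ∧ ((G.Adj u b ∧ G.Adj u c) ↔ ¬ G.Adj b c)
  symm := by
    constructor
    intro b c ⟨hne, hiff⟩
    refine ⟨hne.symm, ?_⟩
    rw [and_comm, G.adj_comm c b]
    exact hiff
  loopless := by
    constructor
    intro b h
    exact h.1 rfl

/-- Pivot of `G` about the edge `(u,v)`. -/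
def pivot {V : Type*} (G : SimpleGraph V) (u v : V) : SimpleGraph V :=
  localComp (localComp (localComp G u) v) u

section LocalComp

variable {V : Type*} {G : SimpleGraph V} {u b c : V}

theorem localComp_adj_of_not_adj_left (h : ¬G.Adj u b) :
    (localComp G u).Adj b c ↔ G.Adj b c := by
  simp only [localComp, h, false_and, false_iff, not_not]
  exact ⟨And.right, fun hbc => ⟨hbc.ne, hbc⟩⟩

theorem localComp_adj_of_not_adj_right (h : ¬G.Adj u c) :
    (localComp G u).Adj b c ↔ G.Adj b c := by
  rw [SimpleGraph.adj_comm, localComp_adj_of_not_adj_left h, G.adj_comm]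

theorem localComp_adj_center : (localComp G u).Adj u c ↔ G.Adj u c :=
  localComp_adj_of_not_adj_left (G.loopless.irrefl u)

theorem localComp_adj_of_adj_of_adj (hb : G.Adj u b) (hc : G.Adj u c) (hbc : b ≠ c) :
    (localComp G u).Adj b c ↔ ¬G.Adj b c := by
  simp [localComp, hb, hc, hbc]

end LocalComp

theorem pivot_toggles_cross_edges {V : Type*} (G : SimpleGraph V) (u v a b : V)
    (huv : G.Adj u v)
    (ha : a ∈ G.neighborSet u \ ({v} ∪ G.neighborSet v))
    (hb : b ∈ G.neighborSet v \ ({u} ∪ G.neighborSet u)) :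
    (pivot G u v).Adj a b ↔ ¬ G.Adj a b := by
  simp only [Set.mem_sdiff, Set.mem_union, Set.mem_singleton_iff, SimpleGraph.mem_neighborSet,
    not_or] at ha hb
  obtain ⟨hua, hav, hva⟩ := ha
  obtain ⟨hvb, -, hub⟩ := hb
  set G₁ := localComp G u
  set G₂ := localComp G₁ v
  have h₁va : G₁.Adj v a := (localComp_adj_of_adj_of_adj huv hua (Ne.symm hav)).2 hva
  have h₁vb : G₁.Adj v b := (localComp_adj_of_not_adj_right hub).2 hvb
  have h₁vu : G₁.Adj v u := (localComp_adj_center.2 huv).symm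
  have h₂ua : ¬G₂.Adj u a := fun h =>
    (localComp_adj_of_adj_of_adj h₁vu h₁va hua.ne).1 h (localComp_adj_center.2 hua)
  have hab : a ≠ b := by rintro rfl; exact hub hua
  show (localComp G₂ u).Adj a b ↔ ¬G.Adj a b
  rw [localComp_adj_of_not_adj_left h₂ua, localComp_adj_of_adj_of_adj h₁va h₁vb hab,
    localComp_adj_of_not_adj_right hub]
end

section
/- Let A ⊆ 𝔽₂ⁿ be a nonempty affine subspace with set of free variables F, and let ψ = Σ_{x∈A} i^{l(x)} (−1)^{q(x)} |x⟩ where l is a linear form and q a quadratic form (both mod 2, possibly depending on all n variables). Then there exist a linear form l′, a quadratic form q′ depending only on the coordinates indexed by F, and a nonzero scalar λ ∈ ℂ, such that ψ = λ Σ_{x∈A} i^{l′(x)} (−1)^{q′(x)} |x⟩. -/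
/-- `A` is a (nonempty) affine subspace of `𝔽₂ⁿ`: a coset of a linear subspace. -/
def IsAffineSubspace {n : ℕ} (A : Set (Fin n → ZMod 2)) : Prop :=
  ∃ (W : Submodule (ZMod 2) (Fin n → ZMod 2)) (x₀ : Fin n → ZMod 2),
    A = (fun w => x₀ + w) '' (W : Set (Fin n → ZMod 2))

/-- `F` is a set of free variables for `A`: the projection onto the coordinates
indexed by `F`, restricted to `A`, is a bijection onto `𝔽₂^F`. -/
def IsFreeSet {n : ℕ} (A : Set (Fin n → ZMod 2)) (F : Finset (Fin n)) : Prop :=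
  Set.BijOn (fun x (j : {k // k ∈ F}) => x j.1) A Set.univ

/-- Triangularity: every dependent variable `x_j` (`j ∉ F`) is, on `A`, an affine
function of free variables of strictly smaller index. -/
def DependsOnlyBelow {n : ℕ} (A : Set (Fin n → ZMod 2)) (F : Finset (Fin n)) : Prop :=
  ∀ j ∉ F, ∃ (a : ZMod 2) (b : Fin n → ZMod 2),
    (∀ k, b k ≠ 0 → k ∈ F ∧ k < j) ∧ ∀ x ∈ A, x j = a + ∑ k, b k * x k

open Complex

/-!
On `A` the free coordinates determine the point, and since `A` is a coset of a subspace, every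
coordinate `y j` agrees on `A` with an affine function of the free coordinates. Substituting these
into `l` and `q` gives, on `A`, an affine function `α + l'` and a quadratic function of the free
variables only (over `𝔽₂`, `x * x = x` turns diagonal products into linear terms). Finally
`i ^ (α + l') = i ^ α * i ^ l' * (-1) ^ (α * l')`, so the cross term `α * l'` is absorbed into the
quadratic part, and the constants `α` and `γ` of the new phase polynomial make up
`λ = i ^ α * (-1) ^ γ`.
-/

open Finset

section Affine
variable {ι R : Type*} [Fintype ι] [CommRing R]

def affineIn (F : Finset ι) : Submodule R ((ι → R) → R) where
  carrier := {f | ∃ (a : R) (b : ι → R), Function.support b ⊆ F ∧ f = fun y => a + b ⬝ᵥ y}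
  add_mem' := by
    rintro _ _ ⟨a, b, hb, rfl⟩ ⟨a', b', hb', rfl⟩
    refine ⟨a + a', b + b', (Function.support_add b b').trans (Set.union_subset hb hb'), ?_⟩
    ext y
    simp only [Pi.add_apply, add_dotProduct]
    ring
  zero_mem' := ⟨0, 0, by simp, by ext; simp⟩
  smul_mem' := by
    rintro r _ ⟨a, b, hb, rfl⟩
    refine ⟨r * a, r • b, (Function.support_smul_subset_right _ b).trans hb, ?_⟩
    ext y
    simp only [Pi.smul_apply, smul_eq_mul, smul_dotProduct]
    ring

variable {F : Finset ι}

theorem eval_mem_affineIn {k : ι} (hk : k ∈ F) : (fun y : ι → R => y k) ∈ affineIn F := by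
  classical
  exact ⟨0, Pi.single k 1, Pi.support_single_subset.trans (by simpa using hk), by ext y; simp⟩

theorem const_mem_affineIn (a : R) : (fun _ : ι → R => a) ∈ affineIn F :=
  ⟨a, 0, by simp, by ext; simp⟩

theorem dotProduct_mem_affineIn {b : ι → R} (hb : Function.support b ⊆ F) :
    (fun y => b ⬝ᵥ y) ∈ affineIn F :=
  ⟨0, b, hb, by ext; simp⟩

theorem affineIn_eq_span :
    affineIn F = Submodule.span R (insert 1 ((fun k y => y k) '' (F : Set ι))) := by
  refine le_antisymm ?_ (Submodule.span_le.2 ?_)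
  · rintro _ ⟨a, b, hb, rfl⟩
    have : (fun y => a + b ⬝ᵥ y) = a • (1 : (ι → R) → R) + ∑ k, b k • fun y => y k := by
      ext y; simp [dotProduct]
    rw [this]
    refine add_mem (Submodule.smul_mem _ _ (Submodule.subset_span (Set.mem_insert _ _)))
      (sum_mem fun k _ => ?_)
    by_cases hk : k ∈ F
    · exact Submodule.smul_mem _ _
        (Submodule.subset_span (Set.mem_insert_of_mem _ ⟨k, hk, rfl⟩))
    · rw [Function.notMem_support.1 fun h => hk (hb h), zero_smul]
      exact zero_mem _
  · rintro _ (rfl | ⟨k, hk, rfl⟩)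
    · exact const_mem_affineIn 1
    · exact eval_mem_affineIn hk

theorem add_linearMap_mem_affineIn [DecidableEq ι] (a : R) (φ : (ι → R) →ₗ[R] R)
    (hφ : ∀ k ∉ F, φ (Pi.single k 1) = 0) : (fun y => a + φ y) ∈ affineIn F := by
  refine ⟨a, fun k => φ (Pi.single k 1), fun k hk => ?_, ?_⟩
  · by_contra h; exact hk (hφ k h)
  · ext y
    rw [φ.pi_apply_eq_sum_univ, dotProduct]
    refine congrArg _ (sum_congr rfl fun k _ => ?_)
    rw [smul_eq_mul, mul_comm]
    congr 2
    ext j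
    rw [Pi.single_comm, Pi.single_apply]

theorem dotProduct_comp_mem_affineIn {g : ι → (ι → R) → R} (hg : ∀ j, g j ∈ affineIn F)
    (d : ι → R) :
    (fun y => d ⬝ᵥ fun j => g j y) ∈ affineIn F := by
  have : (fun y => d ⬝ᵥ fun j => g j y) = ∑ j, d j • g j := by
    ext y
    simp [dotProduct, Finset.sum_apply]
  rw [this]
  exact sum_mem fun j _ => Submodule.smul_mem _ _ (hg j)

theorem exists_mem_affineIn_eqOn_eval {W : Submodule R (ι → R)} {x₀ : ι → R}
    (hF : Set.BijOn (fun x (k : F) => x k) ((fun w => x₀ + w) '' (W : Set (ι → R))) Set.univ)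
    (j : ι) :
    ∃ g ∈ affineIn F, Set.EqOn (fun y => y j) g ((fun w => x₀ + w) '' (W : Set (ι → R))) := by
  classical
  let res : (ι → R) →ₗ[R] (F → R) := LinearMap.funLeft R R Subtype.val
  have hbij : Function.Bijective (res ∘ₗ W.subtype) := by
    refine ⟨(injective_iff_map_eq_zero _).2 fun w hw => ?_, fun z => ?_⟩
    · have h : x₀ + (w : ι → R) = x₀ + 0 :=
        hF.injOn ⟨w, w.2, rfl⟩ ⟨0, W.zero_mem, rfl⟩ (by ext k; simpa [res] using congrFun hw k)
      exact Subtype.ext (add_left_cancel h)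
    · obtain ⟨_, ⟨w, hw, rfl⟩, hz⟩ := hF.surjOn (Set.mem_univ (z + res x₀))
      exact ⟨⟨w, hw⟩, by ext k; simpa [res, add_comm] using congrFun hz k⟩
  let φ : (ι → R) →ₗ[R] R :=
    LinearMap.proj j ∘ₗ W.subtype ∘ₗ (LinearEquiv.ofBijective _ hbij).symm.toLinearMap ∘ₗ res
  refine ⟨fun y => (x₀ j - φ x₀) + φ y, add_linearMap_mem_affineIn _ φ fun k hk => ?_, ?_⟩
  · have : res (Pi.single k 1) = 0 := by
      ext ⟨k', hk'⟩
      simp [res, ne_of_mem_of_not_mem hk' hk]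
    simp [φ, this]
  · rintro _ ⟨w, hw, rfl⟩
    have hφw : φ w = w j :=
      congrArg (fun v : W => (v : ι → R) j)
        (LinearEquiv.ofBijective_symm_apply_apply _ (h := hbij) (⟨w, hw⟩ : W))
    simp only [map_add, hφw, Pi.add_apply]
    ring

end Affine

section Quadratic
variable {ι R : Type*} [Fintype ι] [LinearOrder ι] [CommRing R]

def quadForm (c : ι → ι → R) (c₀ : ι → R) (y : ι → R) : R :=
  ∑ j, ∑ k ∈ univ.filter (fun k => j < k), c j k * y j * y k + c₀ ⬝ᵥ y

theorem quadForm_add (c c' : ι → ι → R) (c₀ c₀' y : ι → R) :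
    quadForm (c + c') (c₀ + c₀') y = quadForm c c₀ y + quadForm c' c₀' y := by
  simp only [quadForm, Pi.add_apply, add_mul, sum_add_distrib, add_dotProduct]
  ring

theorem quadForm_smul (r : R) (c : ι → ι → R) (c₀ y : ι → R) :
    quadForm (r • c) (r • c₀) y = r * quadForm c c₀ y := by
  simp only [quadForm, Pi.smul_apply, smul_eq_mul, smul_dotProduct, mul_add, mul_sum, mul_assoc]

theorem quadForm_single_single {a b : ι} (hab : a < b) (y : ι → R) :
    quadForm (Pi.single a (Pi.single b 1)) 0 y = y a * y b := by
  simp [quadForm, Pi.single_apply, ite_apply, ite_mul, Finset.sum_ite_irrel, hab]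

def quadraticIn (F : Finset ι) : Submodule R ((ι → R) → R) where
  carrier := {f | ∃ (c : ι → ι → R) (c₀ : ι → R) (γ : R),
    Function.support (Function.uncurry c) ⊆ (F : Set ι) ×ˢ (F : Set ι) ∧
    Function.support c₀ ⊆ F ∧ f = fun y => quadForm c c₀ y + γ}
  add_mem' := by
    rintro _ _ ⟨c, c₀, γ, hc, hc₀, rfl⟩ ⟨c', c₀', γ', hc', hc₀', rfl⟩
    refine ⟨c + c', c₀ + c₀', γ + γ',
      (Function.support_add _ _).trans (Set.union_subset hc hc'),
      (Function.support_add _ _).trans (Set.union_subset hc₀ hc₀'), ?_⟩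
    ext y
    simp only [Pi.add_apply, quadForm_add]
    ring
  zero_mem' := ⟨0, 0, 0, by simp, by simp, by ext; simp [quadForm]⟩
  smul_mem' := by
    rintro r _ ⟨c, c₀, γ, hc, hc₀, rfl⟩
    refine ⟨r • c, r • c₀, r * γ, (Function.support_smul_subset_right (fun _ => r) _).trans hc,
      (Function.support_smul_subset_right _ _).trans hc₀, ?_⟩
    ext y
    simp only [Pi.smul_apply, smul_eq_mul, quadForm_smul]
    ring

variable {F : Finset ι}

theorem affineIn_le_quadraticIn : affineIn F ≤ (quadraticIn F : Submodule R _) := by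
  rintro _ ⟨a, b, hb, rfl⟩
  exact ⟨0, b, a, by simp, hb, by ext; simp [quadForm, add_comm]⟩

theorem eval_mul_eval_mem_quadraticIn_of_lt {a b : ι} (hab : a < b) (ha : a ∈ F) (hb : b ∈ F) :
    (fun y : ι → R => y a * y b) ∈ quadraticIn F := by
  refine ⟨Pi.single a (Pi.single b 1), 0, 0, ?_, by simp, by ext; simp [quadForm_single_single hab]⟩
  rintro ⟨j, k⟩ h
  simp only [Function.mem_support, Function.uncurry_apply_pair, Pi.single_apply, ite_apply] at h
  split_ifs at h with hj hk
  · exact ⟨hj ▸ ha, hk ▸ hb⟩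
  all_goals simp at h

theorem eval_mul_eval_mem_quadraticIn {a b : ι} (ha : a ∈ F) (hb : b ∈ F) :
    (fun y : ι → ZMod 2 => y a * y b) ∈ quadraticIn F := by
  rcases lt_trichotomy a b with hab | rfl | hab
  · exact eval_mul_eval_mem_quadraticIn_of_lt hab ha hb
  · have : (fun y : ι → ZMod 2 => y a * y a) = fun y => y a := by
      ext y
      rw [← sq, ZMod.pow_card]
    exact this ▸ affineIn_le_quadraticIn (eval_mem_affineIn ha)
  · simpa only [mul_comm] using eval_mul_eval_mem_quadraticIn_of_lt (R := ZMod 2) hab hb ha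

open Pointwise in
theorem affineIn_mul_affineIn_le : affineIn F * affineIn F ≤ (quadraticIn F : Submodule (ZMod 2) _) := by
  rw [affineIn_eq_span, Submodule.span_mul_span, Submodule.span_le]
  rintro _ ⟨f, hf, g, hg, rfl⟩
  rcases hf with rfl | ⟨j, hj, rfl⟩ <;> rcases hg with rfl | ⟨k, hk, rfl⟩
  · exact affineIn_le_quadraticIn (const_mem_affineIn 1)
  · exact affineIn_le_quadraticIn (by simpa using eval_mem_affineIn hk)
  · exact affineIn_le_quadraticIn (by simpa using eval_mem_affineIn hj)
  · exact eval_mul_eval_mem_quadraticIn hj hk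

theorem quadForm_comp_mem_quadraticIn {g : ι → (ι → ZMod 2) → ZMod 2}
    (hg : ∀ j, g j ∈ affineIn F) (c : ι → ι → ZMod 2) (c₀ : ι → ZMod 2) :
    (fun y => quadForm c c₀ fun j => g j y) ∈ quadraticIn F := by
  have : (fun y => quadForm c c₀ fun j => g j y) =
      ∑ j, ∑ k ∈ univ.filter (fun k => j < k), c j k • (g j * g k) + ∑ j, c₀ j • g j := by
    ext y
    simp [quadForm, dotProduct, Finset.sum_apply, mul_assoc]
  rw [this]
  exact add_mem (sum_mem fun j _ => sum_mem fun k _ => Submodule.smul_mem _ _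
      (affineIn_mul_affineIn_le (Submodule.mul_mem_mul (hg j) (hg k))))
    (sum_mem fun j _ => Submodule.smul_mem _ _ (affineIn_le_quadraticIn (hg j)))

end Quadratic

theorem I_pow_val_add (u v : ZMod 2) :
    I ^ (u + v).val = I ^ u.val * I ^ v.val * (-1) ^ (u * v).val := by
  rw [ZMod.val_add, ZMod.val_mul]
  have hu := u.val_lt
  have hv := v.val_lt
  interval_cases u.val <;> interval_cases v.val <;> simp [← sq]

theorem neg_one_pow_val_add {R : Type*} [Ring R] (u v : ZMod 2) :
    (-1 : R) ^ (u + v).val = (-1) ^ u.val * (-1) ^ v.val := by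
  rw [ZMod.val_add, ← neg_one_pow_eq_pow_mod_two, pow_add]

theorem I_pow_val_mul_neg_one_pow_val {α l q q' γ : ZMod 2} (h : q + α * l = q' + γ) :
    I ^ (α + l).val * (-1) ^ q.val = I ^ α.val * (-1) ^ γ.val * (I ^ l.val * (-1) ^ q'.val) := by
  calc I ^ (α + l).val * (-1) ^ q.val
      = I ^ α.val * I ^ l.val * ((-1) ^ q.val * (-1) ^ (α * l).val) := by
        rw [I_pow_val_add]; ring
    _ = I ^ α.val * I ^ l.val * (-1) ^ (q' + γ).val := by rw [← neg_one_pow_val_add, h]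
    _ = I ^ α.val * (-1) ^ γ.val * (I ^ l.val * (-1) ^ q'.val) := by
        rw [neg_one_pow_val_add]; ring

theorem phase_poly_free_vars_only {n : ℕ} (A : Set (Fin n → ZMod 2))
    [DecidablePred (· ∈ A)]
    (hA : IsAffineSubspace A) (F : Finset (Fin n)) (hF : IsFreeSet A F)
    (d : Fin n → ZMod 2) (c : Fin n → Fin n → ZMod 2) (c₀ : Fin n → ZMod 2)
    (ψ : (Fin n → ZMod 2) → ℂ)
    (hψ : ∀ y, ψ y = if y ∈ A then
        I ^ (∑ j, d j * y j).val *
        (-1 : ℂ) ^ (∑ j, ∑ k ∈ Finset.univ.filter (fun k => j < k), c j k * y j * y k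
            + ∑ j, c₀ j * y j).val
      else 0) :
    ∃ (d' : Fin n → ZMod 2) (c' : Fin n → Fin n → ZMod 2) (c₀' : Fin n → ZMod 2)
      (lam : ℂ), lam ≠ 0 ∧
      (∀ j, d' j ≠ 0 → j ∈ F) ∧
      (∀ j k, c' j k ≠ 0 → j ∈ F ∧ k ∈ F) ∧
      (∀ j, c₀' j ≠ 0 → j ∈ F) ∧
      ∀ y, ψ y = lam * (if y ∈ A then
          I ^ (∑ j, d' j * y j).val *
          (-1 : ℂ) ^ (∑ j, ∑ k ∈ Finset.univ.filter (fun k => j < k), c' j k * y j * y k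
              + ∑ j, c₀' j * y j).val
        else 0) := by
  obtain ⟨W, x₀, rfl⟩ := hA
  choose g hg hgA using exists_mem_affineIn_eqOn_eval hF
  obtain ⟨α, d', hd', hl⟩ := dotProduct_comp_mem_affineIn hg d
  obtain ⟨c', c₀', γ, hc', hc₀', hq⟩ := add_mem (quadForm_comp_mem_quadraticIn hg c c₀)
    (affineIn_le_quadraticIn (Submodule.smul_mem _ α (dotProduct_mem_affineIn hd')))
  refine ⟨d', c', c₀', I ^ α.val * (-1) ^ γ.val, by simp [I_ne_zero], hd',
    fun j k h => hc' (a := (j, k)) h, hc₀', fun y => ?_⟩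
  rw [hψ]
  split_ifs with hy
  · have hsubst : (fun j => g j y) = y := funext fun j => (hgA j hy).symm
    have hly := congrFun hl y
    have hqy := congrFun hq y
    simp only [hsubst, Pi.add_apply, Pi.smul_apply, smul_eq_mul] at hly hqy
    rw [show ∑ j, d j * y j = α + d' ⬝ᵥ y from hly]
    exact I_pow_val_mul_neg_one_pow_val hqy
  · rw [mul_zero]
end

section
/- Let A ⊆ 𝔽₂ⁿ be an affine subspace with set of free variables F, and let ψ = λ Σ_{x∈A} i^{l(x)}(−1)^{q(x)}|x⟩ and φ = μ Σ_{x∈A} i^{l′(x)}(−1)^{q′(x)}|x⟩ with λ, μ ≠ 0, where l, l′ are linear forms and q, q′ quadratic forms over 𝔽₂ depending only on coordinates in F. Then ψ and φ are linearly dependent if and only if all coefficients agree: d_j = d_j′, c_j = c_j′, and c_{jk} = c_{jk}′ for all j, k ∈ F. -/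
open Complex

/-! A phase polynomial on `A` is determined by its values at the points whose free coordinates
are `0`, `e_j` or `e_j + e_k`: the zero point fixes the scalar `λ = zμ`, and since
`(a, b) ↦ i^a (-1)^b` is injective on `𝔽₂²`, the point `e_j` reads off `d_j` and `c_j`,
and then `e_j + e_k` reads off `c_{jk}`. Free variables make every such point available in `A`,
and nothing outside `F` enters the amplitudes. -/

theorem I_pow_mul_neg_one_pow_inj {a b a' b' : ZMod 2}
    (h : I ^ a.val * (-1 : ℂ) ^ b.val = I ^ a'.val * (-1 : ℂ) ^ b'.val) : a = a' ∧ b = b' := by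
  have cases : ∀ x : ZMod 2, x = 0 ∨ x = 1 := by decide
  rcases cases a with rfl | rfl <;> rcases cases b with rfl | rfl <;>
    rcases cases a' with rfl | rfl <;> rcases cases b' with rfl | rfl <;>
    simp_all [ZMod.val_one, Complex.ext_iff] <;> norm_num at h

theorem IsFreeSet.exists_mem_eqOn {n : ℕ} {A : Set (Fin n → ZMod 2)} {F : Finset (Fin n)}
    (hF : IsFreeSet A F) (u : Fin n → ZMod 2) : ∃ x ∈ A, ∀ j ∈ F, x j = u j := by
  obtain ⟨x, hxA, hxu⟩ := hF.surjOn (Set.mem_univ fun j : {k // k ∈ F} => u j)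
  exact ⟨x, hxA, fun j hj => congrFun hxu ⟨j, hj⟩⟩

namespace PhasePoly

variable {n : ℕ} (F : Finset (Fin n))

def linForm (e x : Fin n → ZMod 2) : ZMod 2 := ∑ j ∈ F, e j * x j

def quadForm (c : Fin n → Fin n → ZMod 2) (x : Fin n → ZMod 2) : ZMod 2 :=
  ∑ j ∈ F, ∑ k ∈ F.filter (fun k => j < k), c j k * x j * x k

def amplitude (d : Fin n → ZMod 2) (c : Fin n → Fin n → ZMod 2) (c₀ x : Fin n → ZMod 2) : ℂ :=
  I ^ (linForm F d x).val * (-1 : ℂ) ^ (quadForm F c x + linForm F c₀ x).val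

variable {F}

theorem linForm_congr (e : Fin n → ZMod 2) {x y : Fin n → ZMod 2} (h : ∀ j ∈ F, x j = y j) :
    linForm F e x = linForm F e y :=
  Finset.sum_congr rfl fun j hj => by rw [h j hj]

theorem quadForm_congr (c : Fin n → Fin n → ZMod 2) {x y : Fin n → ZMod 2}
    (h : ∀ j ∈ F, x j = y j) : quadForm F c x = quadForm F c y :=
  Finset.sum_congr rfl fun j hj => Finset.sum_congr rfl fun k hk => by
    rw [h j hj, h k (Finset.mem_filter.mp hk).1]

theorem amplitude_congr (d : Fin n → ZMod 2) (c : Fin n → Fin n → ZMod 2) (c₀ : Fin n → ZMod 2)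
    {x y : Fin n → ZMod 2} (h : ∀ j ∈ F, x j = y j) :
    amplitude F d c c₀ x = amplitude F d c c₀ y := by
  rw [amplitude, amplitude, linForm_congr d h, quadForm_congr c h, linForm_congr c₀ h]

theorem amplitude_zero (d : Fin n → ZMod 2) (c : Fin n → Fin n → ZMod 2) (c₀ : Fin n → ZMod 2) :
    amplitude F d c c₀ 0 = 1 := by
  simp [amplitude, linForm, quadForm]

theorem amplitude_eq_of_eqOn {A : Set (Fin n → ZMod 2)} (hF : IsFreeSet A F)
    {d d' : Fin n → ZMod 2} {c c' : Fin n → Fin n → ZMod 2} {c₀ c₀' : Fin n → ZMod 2}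
    (h : ∀ x ∈ A, amplitude F d c c₀ x = amplitude F d' c' c₀' x) :
    amplitude F d c c₀ = amplitude F d' c' c₀' := by
  funext u
  obtain ⟨x, hxA, hxu⟩ := hF.exists_mem_eqOn u
  rw [← amplitude_congr d c c₀ hxu, ← amplitude_congr d' c' c₀' hxu, h x hxA]

theorem amplitude_eq_of_coeffs_eq {d d' : Fin n → ZMod 2} {c c' : Fin n → Fin n → ZMod 2}
    {c₀ c₀' : Fin n → ZMod 2} (hd : ∀ j ∈ F, d j = d' j) (hc₀ : ∀ j ∈ F, c₀ j = c₀' j)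
    (hc : ∀ j ∈ F, ∀ k ∈ F, j < k → c j k = c' j k) :
    amplitude F d c c₀ = amplitude F d' c' c₀' := by
  funext x
  have hlin (e e' : Fin n → ZMod 2) (he : ∀ j ∈ F, e j = e' j) :
      linForm F e x = linForm F e' x :=
    Finset.sum_congr rfl fun j hj => by rw [he j hj]
  have hquad : quadForm F c x = quadForm F c' x :=
    Finset.sum_congr rfl fun j hj => Finset.sum_congr rfl fun k hk => by
      obtain ⟨hk, hjk⟩ := Finset.mem_filter.mp hk
      rw [hc j hj k hk hjk]
  rw [amplitude, amplitude, hlin d d' hd, hlin c₀ c₀' hc₀, hquad]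

variable {S : Finset (Fin n)}

theorem linForm_indicator (hS : S ⊆ F) (e : Fin n → ZMod 2) :
    linForm F e (fun a => if a ∈ S then 1 else 0) = ∑ a ∈ S, e a := by
  simp only [linForm, mul_ite, mul_one, mul_zero, Finset.sum_ite_mem,
    Finset.inter_eq_right.mpr hS]

theorem quadForm_indicator (hS : S ⊆ F) (c : Fin n → Fin n → ZMod 2) :
    quadForm F c (fun a => if a ∈ S then 1 else 0) =
      ∑ j ∈ S, ∑ k ∈ S.filter (fun k => j < k), c j k := by
  simp only [quadForm, mul_ite, mul_one, mul_zero, Finset.sum_ite_mem,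
    Finset.sum_ite_irrel, Finset.sum_const_zero, Finset.filter_inter,
    Finset.inter_eq_right.mpr hS]

theorem coeffs_eq_of_amplitude_eq {d d' : Fin n → ZMod 2} {c c' : Fin n → Fin n → ZMod 2}
    {c₀ c₀' : Fin n → ZMod 2} (h : amplitude F d c c₀ = amplitude F d' c' c₀') :
    (∀ j ∈ F, d j = d' j) ∧ (∀ j ∈ F, c₀ j = c₀' j) ∧
      (∀ j ∈ F, ∀ k ∈ F, j < k → c j k = c' j k) := by
  have sums_eq (S : Finset (Fin n)) (hS : S ⊆ F) :
      ∑ a ∈ S, d a = ∑ a ∈ S, d' a ∧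
        ∑ j ∈ S, ∑ k ∈ S.filter (fun k => j < k), c j k + ∑ a ∈ S, c₀ a =
          ∑ j ∈ S, ∑ k ∈ S.filter (fun k => j < k), c' j k + ∑ a ∈ S, c₀' a := by
    have := I_pow_mul_neg_one_pow_inj (congrFun h fun a => if a ∈ S then 1 else 0)
    simpa only [linForm_indicator hS, quadForm_indicator hS] using this
  have single (j) (hj : j ∈ F) : d j = d' j ∧ c₀ j = c₀' j := by
    simpa [Finset.filter_singleton] using sums_eq {j} (Finset.singleton_subset_iff.mpr hj)
  refine ⟨fun j hj => (single j hj).1, fun j hj => (single j hj).2, fun j hj k hk hjk => ?_⟩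
  have pair := (sums_eq {j, k} (Finset.insert_subset hj (Finset.singleton_subset_iff.mpr hk))).2
  simpa [Finset.sum_pair hjk.ne, Finset.filter_insert, Finset.filter_singleton, hjk,
    hjk.not_gt, (single j hj).2, (single k hk).2] using pair

end PhasePoly

open PhasePoly

theorem phase_poly_linear_dependence_iff_general {n : ℕ} (A : Set (Fin n → ZMod 2))
    [DecidablePred (· ∈ A)]
    (F : Finset (Fin n)) (hF : IsFreeSet A F)
    (d d' : Fin n → ZMod 2) (c c' : Fin n → Fin n → ZMod 2) (c₀ c₀' : Fin n → ZMod 2)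
    (lam mu : ℂ) (hlam : lam ≠ 0) (hmu : mu ≠ 0)
    (ψ φ : (Fin n → ZMod 2) → ℂ)
    (hψ : ∀ y, ψ y = lam * (if y ∈ A then
        I ^ (∑ j ∈ F, d j * y j).val *
        (-1 : ℂ) ^ (∑ j ∈ F, ∑ k ∈ F.filter (fun k => j < k), c j k * y j * y k
            + ∑ j ∈ F, c₀ j * y j).val
      else 0))
    (hφ : ∀ y, φ y = mu * (if y ∈ A then
        I ^ (∑ j ∈ F, d' j * y j).val *
        (-1 : ℂ) ^ (∑ j ∈ F, ∑ k ∈ F.filter (fun k => j < k), c' j k * y j * y k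
            + ∑ j ∈ F, c₀' j * y j).val
      else 0)) :
    (∃ z : ℂ, z ≠ 0 ∧ ψ = z • φ) ↔
      ((∀ j ∈ F, d j = d' j) ∧ (∀ j ∈ F, c₀ j = c₀' j) ∧
        (∀ j ∈ F, ∀ k ∈ F, j < k → c j k = c' j k)) := by
  have hψ' : ∀ y, ψ y = lam * if y ∈ A then amplitude F d c c₀ y else 0 := hψ
  have hφ' : ∀ y, φ y = mu * if y ∈ A then amplitude F d' c' c₀' y else 0 := hφ
  constructor
  · rintro ⟨z, -, hz⟩
    have hval (x) (hx : x ∈ A) : lam * amplitude F d c c₀ x = z * mu * amplitude F d' c' c₀' x := by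
      simpa [hψ', hφ', hx, mul_assoc] using congrFun hz x
    have hlam_eq : lam = z * mu := by
      obtain ⟨x₀, hx₀A, hx₀⟩ := hF.exists_mem_eqOn 0
      simpa [amplitude_congr _ _ _ hx₀, amplitude_zero] using hval x₀ hx₀A
    refine coeffs_eq_of_amplitude_eq <| amplitude_eq_of_eqOn hF fun x hx => ?_
    exact mul_left_cancel₀ hlam (by rw [hval x hx, hlam_eq])
  · rintro ⟨hd, hc₀, hc⟩
    have h := amplitude_eq_of_coeffs_eq hd hc₀ hc
    refine ⟨lam / mu, div_ne_zero hlam hmu, funext fun y => ?_⟩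
    rw [Pi.smul_apply, smul_eq_mul, hψ', hφ', h]
    split_ifs <;> field_simp

theorem phase_poly_linear_dependence_iff {n : ℕ} (A : Set (Fin n → ZMod 2))
    [DecidablePred (· ∈ A)]
    (hA : IsAffineSubspace A) (F : Finset (Fin n)) (hF : IsFreeSet A F)
    (d d' : Fin n → ZMod 2) (c c' : Fin n → Fin n → ZMod 2) (c₀ c₀' : Fin n → ZMod 2)
    (lam mu : ℂ) (hlam : lam ≠ 0) (hmu : mu ≠ 0)
    (ψ φ : (Fin n → ZMod 2) → ℂ)
    (hψ : ∀ y, ψ y = lam * (if y ∈ A then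
        I ^ (∑ j ∈ F, d j * y j).val *
        (-1 : ℂ) ^ (∑ j ∈ F, ∑ k ∈ F.filter (fun k => j < k), c j k * y j * y k
            + ∑ j ∈ F, c₀ j * y j).val
      else 0))
    (hφ : ∀ y, φ y = mu * (if y ∈ A then
        I ^ (∑ j ∈ F, d' j * y j).val *
        (-1 : ℂ) ^ (∑ j ∈ F, ∑ k ∈ F.filter (fun k => j < k), c' j k * y j * y k
            + ∑ j ∈ F, c₀' j * y j).val
      else 0)) :
    (∃ z : ℂ, z ≠ 0 ∧ ψ = z • φ) ↔
      ((∀ j ∈ F, d j = d' j) ∧ (∀ j ∈ F, c₀ j = c₀' j) ∧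
        (∀ j ∈ F, ∀ k ∈ F, j < k → c j k = c' j k)) :=
  phase_poly_linear_dependence_iff_general A F hF d d' c c' c₀ c₀' lam mu hlam hmu ψ φ hψ hφ
end
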